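/- arXiv:1608.07199 — 2 statements merged into one kernel-verified Lean document; each statement's English description precedes it below -/
import Mathlib

section
/- Let ω be a locally finite nonnegative Borel measure on ℝ^n, let p ∈ (1,∞), and let 𝒢 ⊆ 𝒟 be a countable family of dyadic cubes such that ∑_{G'∈𝒢, G'⊆G} ω(G') ≤ 2 ω(G) for every G ∈ 𝒢. Then there is a constant C_p depending only on p such that ∑_{G∈𝒢} (⟨h⟩_G^ω)^p ω(G) ≤ C_p ∫_{ℝ^n} h^p dω for every nonnegative Borel function h on ℝ^n. -/
open MeasureTheory ENNReal Set
open scoped Classical NNReal ENNReal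

noncomputable section

/-- The index of a dyadic cube `2^{-k}([0,1)^n + m)` of the standard dyadic lattice `𝒟`. -/
abbrev CubeIdx (n : ℕ) := ℤ × (Fin n → ℤ)

/-- The dyadic cube `2^{-k}([0,1)^n + m)`. -/
def dyadicCube (n : ℕ) (k : ℤ) (m : Fin n → ℤ) : Set (Fin n → ℝ) :=
  {x | ∀ i, x i ∈ Set.Ico ((2:ℝ) ^ (-k) * (m i : ℝ)) ((2:ℝ) ^ (-k) * ((m i : ℝ) + 1))}

/-- The dyadic cube associated to an index. -/
def idxCube (n : ℕ) (Q : CubeIdx n) : Set (Fin n → ℝ) := dyadicCube n Q.1 Q.2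

/-- The Carleson box `Q̂ = Q × (0, ℓ(Q)]`, where `ℓ(Q) = 2^{-k}`. -/
def carlesonBox (n : ℕ) (k : ℤ) (m : Fin n → ℤ) : Set ((Fin n → ℝ) × ℝ) :=
  (dyadicCube n k m) ×ˢ (Set.Ioc (0:ℝ) ((2:ℝ) ^ (-k)))

/-- The vertical `ℓ²`-norm `|f|_{ℓ²}(x) = (∑_{k ∈ ℤ} f(x, 2^{-k})²)^{1/2}`. -/
def vertL2 (n : ℕ) (f : (Fin n → ℝ) × ℝ → ℝ≥0∞) (x : Fin n → ℝ) : ℝ≥0∞ :=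
  (∑' k : ℤ, (f (x, (2:ℝ) ^ (-k))) ^ 2) ^ (1/2 : ℝ)

/-- The mixed norm `‖f‖_{L^q(σ; ℓ²)} = (∫ |f|_{ℓ²}^q dσ)^{1/q}`. -/
def mixedNorm (n : ℕ) (σ : Measure (Fin n → ℝ)) (q : ℝ)
    (f : (Fin n → ℝ) × ℝ → ℝ≥0∞) : ℝ≥0∞ :=
  (∫⁻ x, (vertL2 n f x) ^ q ∂σ) ^ (1/q)

/-- The norm `‖g‖_{L^q(ω)} = (∫ g^q dω)^{1/q}` of a nonnegative function. -/
def lpNorm (n : ℕ) (ω : Measure (Fin n → ℝ)) (q : ℝ) (g : (Fin n → ℝ) → ℝ≥0∞) : ℝ≥0∞ :=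
  (∫⁻ x, (g x) ^ q ∂ω) ^ (1/q)

/-- `∬_{Q̂} f μ dη dσ = ∑_{j ∈ ℤ, 2^j ≤ ℓ(Q)} ∫_Q f(x, 2^j) μ(x, 2^j) dσ(x)`. -/
def boxInt (n : ℕ) (σ : Measure (Fin n → ℝ)) (μ : (Fin n → ℝ) × ℝ → ℝ≥0∞)
    (f : (Fin n → ℝ) × ℝ → ℝ≥0∞) (k : ℤ) (m : Fin n → ℤ) : ℝ≥0∞ :=
  ∑' j : ℤ, if (2:ℝ) ^ j ≤ (2:ℝ) ^ (-k) then
      ∫⁻ x in dyadicCube n k m, f (x, (2:ℝ) ^ j) * μ (x, (2:ℝ) ^ j) ∂σ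
    else 0

/-- `1_{Q̂} μ`. -/
def boxFn (n : ℕ) (μ : (Fin n → ℝ) × ℝ → ℝ≥0∞) (k : ℤ) (m : Fin n → ℤ) :
    (Fin n → ℝ) × ℝ → ℝ≥0∞ :=
  (carlesonBox n k m).indicator μ

/-- The test function `φ_Q = |1_{Q̂} μ|_{ℓ²}^{p'-2} 1_{Q̂} μ`,
interpreted as `0` where `|1_{Q̂} μ|_{ℓ²} = 0`. -/
def testFn (n : ℕ) (p' : ℝ) (μ : (Fin n → ℝ) × ℝ → ℝ≥0∞) (k : ℤ) (m : Fin n → ℤ) :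
    (Fin n → ℝ) × ℝ → ℝ≥0∞ :=
  fun z => if vertL2 n (boxFn n μ k m) z.1 = 0 then 0
    else (vertL2 n (boxFn n μ k m) z.1) ^ (p' - 2) * boxFn n μ k m z

/-- The bilinear form `Λ(f,g) = ∑_{Q ∈ 𝒟} λ_Q (∬_{Q̂} f μ dη dσ) (∫_Q g dω)`. -/
def lambdaForm (n : ℕ) (σ ω : Measure (Fin n → ℝ)) (μ : (Fin n → ℝ) × ℝ → ℝ≥0∞)
    (lam : CubeIdx n → ℝ≥0) (f : (Fin n → ℝ) × ℝ → ℝ≥0∞) (g : (Fin n → ℝ) → ℝ≥0∞) :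
    ℝ≥0∞ :=
  ∑' Q : CubeIdx n,
    (lam Q : ℝ≥0∞) * boxInt n σ μ f Q.1 Q.2 * ∫⁻ x in idxCube n Q, g x ∂ω

/-- The localized bilinear form `Λ_{Q₀}(f,g)`, where the sum is restricted to
dyadic cubes `Q ⊆ Q₀`. -/
def lambdaLoc (n : ℕ) (σ ω : Measure (Fin n → ℝ)) (μ : (Fin n → ℝ) × ℝ → ℝ≥0∞)
    (lam : CubeIdx n → ℝ≥0) (Q₀ : CubeIdx n)
    (f : (Fin n → ℝ) × ℝ → ℝ≥0∞) (g : (Fin n → ℝ) → ℝ≥0∞) : ℝ≥0∞ :=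
  ∑' Q : CubeIdx n, if idxCube n Q ⊆ idxCube n Q₀ then
      (lam Q : ℝ≥0∞) * boxInt n σ μ f Q.1 Q.2 * ∫⁻ x in idxCube n Q, g x ∂ω
    else 0

/-- The average `⟨h⟩_Q^ν = ν(Q)⁻¹ ∫_Q h dν`, understood as `0` when `ν(Q) = 0`. -/
def cubeAvg (n : ℕ) (ν : Measure (Fin n → ℝ)) (h : (Fin n → ℝ) → ℝ≥0∞)
    (k : ℤ) (m : Fin n → ℤ) : ℝ≥0∞ :=
  (∫⁻ x in dyadicCube n k m, h x ∂ν) / ν (dyadicCube n k m)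

/-!
Layer-cake decomposition over dyadic levels. Write `a_G` for the `ω`-average of `h` on `G`. For
each `j ∈ ℤ` consider the cubes of `𝒢` with `a_G > 2^{j+1}`; on each of them the truncation
`h 1_{h > 2^j}` still has average `> 2^j`. Two dyadic cubes are nested or disjoint, so the maximal
cubes of any finite subfamily are pairwise disjoint, and by the Carleson condition they carry at
least half of its total mass. Hence `2^j ∑_{a_G > 2^{j+1}} ω(G) ≤ 2 ∫ h 1_{h > 2^j} dω`.
Multiplying by `2^{j(p-1)}` and summing over `j`, the left side dominates `4^{-p} ∑_G a_G^p ω(G)`,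
while on the right `∑_{2^j < h} 2^{j(p-1)}` is a geometric series bounded by `C_p h^{p-1}`.
-/

namespace CarlesonEmbedding

lemma tsum_zpow_Iic {r : ℝ≥0∞} (hr₀ : r ≠ 0) (hr : r ≠ ∞) (J : ℤ) :
    ∑' j : Iic J, r ^ (j : ℤ) = r ^ J * (1 - r⁻¹)⁻¹ := by
  let e : ℕ ≃ Iic J :=
    { toFun := fun i => ⟨J - i, by simp⟩
      invFun := fun j => (J - j).toNat
      left_inv := fun i => by simp
      right_inv := fun ⟨j, hj⟩ => by
        ext
        rw [mem_Iic] at hj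
        simp only [Int.ofNat_toNat]
        omega }
  rw [← e.tsum_eq, ← ENNReal.tsum_geometric, ← ENNReal.tsum_mul_left]
  refine tsum_congr fun i => ?_
  simp only [e, Equiv.coe_fn_mk]
  rw [ENNReal.zpow_sub hr₀ hr, zpow_natCast, ENNReal.inv_pow]

lemma two_zpow_rpow_comm (j : ℤ) (q : ℝ) : ((2 : ℝ≥0∞) ^ j) ^ q = ((2 : ℝ≥0∞) ^ q) ^ j := by
  rw [← ENNReal.rpow_intCast_mul, mul_comm, ENNReal.rpow_mul_intCast]

lemma tsum_ite_two_zpow_lt_le {q : ℝ} (hq : 0 < q) (b : ℝ≥0∞) :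
    ∑' j : ℤ, (if (2 : ℝ≥0∞) ^ j < b then ((2 : ℝ≥0∞) ^ j) ^ q else 0)
      ≤ (1 - ((2 : ℝ≥0∞) ^ q)⁻¹)⁻¹ * b ^ q := by
  rcases eq_or_ne b 0 with rfl | hb₀
  · simp
  rcases eq_or_ne b ∞ with rfl | hb
  · simp [ENNReal.top_rpow_of_pos hq, ENNReal.mul_top]
  obtain ⟨J, hJb, hbJ⟩ := ENNReal.exists_mem_Ioc_zpow hb₀ hb one_lt_two ENNReal.ofNat_ne_top
  have hr₀ : (2 : ℝ≥0∞) ^ q ≠ 0 := by positivity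
  have hr : (2 : ℝ≥0∞) ^ q ≠ ∞ := ENNReal.rpow_ne_top_of_nonneg hq.le ENNReal.ofNat_ne_top
  calc ∑' j : ℤ, (if (2 : ℝ≥0∞) ^ j < b then ((2 : ℝ≥0∞) ^ j) ^ q else 0)
      ≤ ∑' j : ℤ, (Iic J).indicator (fun j => ((2 : ℝ≥0∞) ^ q) ^ j) j := by
        refine ENNReal.tsum_le_tsum fun j => ?_
        split_ifs with hj
        · have hjJ : j ≤ J := by
            by_contra! hJj
            exact (hj.trans_le hbJ).not_ge (ENNReal.zpow_le_of_le one_le_two hJj)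
          rw [indicator_of_mem (mem_Iic.mpr hjJ), two_zpow_rpow_comm]
        · exact zero_le
    _ = ((2 : ℝ≥0∞) ^ q) ^ J * (1 - ((2 : ℝ≥0∞) ^ q)⁻¹)⁻¹ := by
        rw [← tsum_subtype, tsum_zpow_Iic hr₀ hr]
    _ ≤ (1 - ((2 : ℝ≥0∞) ^ q)⁻¹)⁻¹ * b ^ q := by
        rw [mul_comm, ← two_zpow_rpow_comm]
        gcongr

lemma rpow_le_four_rpow_mul_tsum {p : ℝ} (hp : 0 < p) (a : ℝ≥0∞) :
    a ^ p ≤ 4 ^ p * ∑' j : ℤ, (if 2 * (2 : ℝ≥0∞) ^ j < a then ((2 : ℝ≥0∞) ^ j) ^ p else 0) := by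
  rcases eq_or_ne a 0 with rfl | ha₀
  · simp [ENNReal.zero_rpow_of_pos hp]
  rcases eq_or_ne a ∞ with rfl | ha
  · have hsum : ∑' j : ℤ, (if 2 * (2 : ℝ≥0∞) ^ j < ∞ then ((2 : ℝ≥0∞) ^ j) ^ p else 0) = ∞ := by
      refine top_le_iff.mp <| (ENNReal.tsum_const_eq_top_of_ne_zero (α := ℕ) one_ne_zero).ge.trans
        <| (ENNReal.tsum_le_tsum fun i => ?_).trans
          (ENNReal.tsum_comp_le_tsum_of_injective Nat.cast_injective _)
      rw [if_pos (ENNReal.mul_lt_top ENNReal.ofNat_lt_top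
        (ENNReal.zpow_lt_top two_ne_zero ENNReal.ofNat_ne_top _)), zpow_natCast]
      exact ENNReal.one_le_rpow (one_le_pow₀ one_le_two) hp
    rw [hsum, ENNReal.mul_top (by positivity)]
    exact le_top
  obtain ⟨K, hKa, haK⟩ := ENNReal.exists_mem_Ioc_zpow ha₀ ha one_lt_two ENNReal.ofNat_ne_top
  have h2K : (2 : ℝ≥0∞) ^ (K + 1) = 4 * 2 ^ (K - 1) := by
    rw [show K + 1 = 2 + (K - 1) by ring, ENNReal.zpow_add two_ne_zero ENNReal.ofNat_ne_top]
    norm_num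
  have hK : 2 * (2 : ℝ≥0∞) ^ (K - 1) = 2 ^ K := by
    conv_rhs => rw [show K = 1 + (K - 1) by ring]
    rw [ENNReal.zpow_add two_ne_zero ENNReal.ofNat_ne_top, zpow_one]
  calc a ^ p ≤ ((2 : ℝ≥0∞) ^ (K + 1)) ^ p := by gcongr
    _ = 4 ^ p * ((2 : ℝ≥0∞) ^ (K - 1)) ^ p := by
        rw [h2K, ENNReal.mul_rpow_of_nonneg _ _ hp.le]
    _ ≤ _ := by
        gcongr
        refine le_of_eq_of_le ?_ (ENNReal.le_tsum (K - 1))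
        rw [if_pos (by rwa [hK])]

lemma rpow_sub_one_mul_self {p : ℝ} (hp : 1 ≤ p) (x : ℝ≥0∞) : x ^ (p - 1) * x = x ^ p := by
  conv_rhs => rw [show p = (p - 1) + 1 by ring]
  rw [ENNReal.rpow_add_of_nonneg _ _ (by linarith) zero_le_one, ENNReal.rpow_one]

lemma tsum_rpow_mul_le_four_rpow_mul_tsum {κ : Type*} {p : ℝ} (hp : 0 < p) (a w : κ → ℝ≥0∞) :
    ∑' i, a i ^ p * w i
      ≤ 4 ^ p * ∑' j : ℤ, ((2 : ℝ≥0∞) ^ j) ^ p * ∑' i, (if 2 * 2 ^ j < a i then w i else 0) := by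
  calc ∑' i, a i ^ p * w i
      ≤ ∑' i, 4 ^ p * ∑' j : ℤ, (if 2 * 2 ^ j < a i then ((2 : ℝ≥0∞) ^ j) ^ p else 0) * w i := by
        refine ENNReal.tsum_le_tsum fun i => ?_
        rw [ENNReal.tsum_mul_right, ← mul_assoc]
        gcongr
        exact rpow_le_four_rpow_mul_tsum hp _
    _ = 4 ^ p * ∑' j : ℤ, ((2 : ℝ≥0∞) ^ j) ^ p * ∑' i, (if 2 * 2 ^ j < a i then w i else 0) := by
        simp_rw [ENNReal.tsum_mul_left, ← ENNReal.tsum_mul_left]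
        rw [ENNReal.tsum_comm]
        refine tsum_congr fun j => tsum_congr fun i => congrArg _ ?_
        split_ifs <;> simp

section Average

variable {α : Type*} [MeasurableSpace α] {μ : Measure α} {s : Set α} {f : α → ℝ≥0∞} {c : ℝ≥0∞}

lemma mul_measure_le_setLIntegral_of_lt_setLAverage (h : c < ⨍⁻ x in s, f x ∂μ) :
    c * μ s ≤ ∫⁻ x in s, f x ∂μ := by
  have hs : μ s ≠ ∞ := by
    rintro hs
    simp [setLAverage_eq, hs] at h
  rw [← measure_mul_setLAverage f hs, mul_comm]
  gcongr

lemma setLAverage_le_setLAverage_indicator_add (c : ℝ≥0∞) :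
    ⨍⁻ x in s, f x ∂μ ≤ ⨍⁻ x in s, {x | c < f x}.indicator f x ∂μ + c := by
  have hpt : ∀ x, f x ≤ {x | c < f x}.indicator f x + c := fun x => by
    by_cases hx : c < f x
    · simp [hx]
    · simpa [hx] using not_lt.mp hx
  calc ⨍⁻ x in s, f x ∂μ ≤ (∫⁻ x in s, {x | c < f x}.indicator f x ∂μ + c * μ s) / μ s := by
        rw [setLAverage_eq, ← setLIntegral_const, ← lintegral_add_right _ measurable_const]
        gcongr with x
        exact hpt x
    _ ≤ ⨍⁻ x in s, {x | c < f x}.indicator f x ∂μ + c := by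
        rw [ENNReal.add_div, setLAverage_eq]
        gcongr
        exact ENNReal.div_le_of_le_mul le_rfl

lemma lt_setLAverage_indicator_of_two_mul_lt (h : 2 * c < ⨍⁻ x in s, f x ∂μ) :
    c < ⨍⁻ x in s, {x | c < f x}.indicator f x ∂μ := by
  by_contra! hle
  refine h.not_ge ?_
  calc ⨍⁻ x in s, f x ∂μ ≤ ⨍⁻ x in s, {x | c < f x}.indicator f x ∂μ + c :=
        setLAverage_le_setLAverage_indicator_add c
    _ ≤ 2 * c := by rw [two_mul]; gcongr

lemma tsum_two_zpow_rpow_mul_lintegral_indicator_le (hf : Measurable f) {p : ℝ} (hp : 1 < p) :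
    ∑' j : ℤ, ((2 : ℝ≥0∞) ^ j) ^ (p - 1) * ∫⁻ x, {x | (2 : ℝ≥0∞) ^ j < f x}.indicator f x ∂μ
      ≤ (1 - ((2 : ℝ≥0∞) ^ (p - 1))⁻¹)⁻¹ * ∫⁻ x, f x ^ p ∂μ := by
  have hg : ∀ j : ℤ, Measurable ({x | (2 : ℝ≥0∞) ^ j < f x}.indicator f) := fun j =>
    hf.indicator (measurableSet_lt measurable_const hf)
  simp_rw [← lintegral_const_mul _ (hg _)]
  rw [← lintegral_tsum fun j => ((hg j).const_mul _).aemeasurable,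
    ← lintegral_const_mul _ (hf.pow_const p)]
  refine lintegral_mono fun x => ?_
  calc ∑' j : ℤ, ((2 : ℝ≥0∞) ^ j) ^ (p - 1) * {x | (2 : ℝ≥0∞) ^ j < f x}.indicator f x
      = (∑' j : ℤ, if 2 ^ j < f x then ((2 : ℝ≥0∞) ^ j) ^ (p - 1) else 0) * f x := by
        rw [← ENNReal.tsum_mul_right]
        refine tsum_congr fun j => ?_
        by_cases hj : 2 ^ j < f x <;> simp [hj]
    _ ≤ (1 - ((2 : ℝ≥0∞) ^ (p - 1))⁻¹)⁻¹ * f x ^ (p - 1) * f x := by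
        gcongr
        exact tsum_ite_two_zpow_lt_le (by linarith) _
    _ = (1 - ((2 : ℝ≥0∞) ^ (p - 1))⁻¹)⁻¹ * f x ^ p := by
        rw [mul_assoc, rpow_sub_one_mul_self hp.le]

end Average

section Laminar

variable {α ι : Type*} {Q : ι → Set α}

def IsLaminar (Q : ι → Set α) : Prop :=
  ∀ i j, Q i ⊆ Q j ∨ Q j ⊆ Q i ∨ Disjoint (Q i) (Q j)

lemma IsLaminar.exists_pairwiseDisjoint_cover (hQ : IsLaminar Q) (F : Finset ι) :
    ∃ 𝒜 : Finset (Set α), (𝒜 : Set (Set α)).PairwiseDisjoint id ∧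
      (∀ A ∈ 𝒜, ∃ R ∈ F, Q R = A) ∧ ∀ G ∈ F, ∃ A ∈ 𝒜, Q G ⊆ A := by
  refine ⟨(F.image Q).filter (Maximal (· ∈ F.image Q)), ?_, fun A hA => ?_, fun G hG => ?_⟩
  · intro A hA B hB hAB
    simp only [Finset.mem_coe, Finset.mem_filter] at hA hB
    obtain ⟨R, -, rfl⟩ := Finset.mem_image.mp hA.1
    obtain ⟨R', -, rfl⟩ := Finset.mem_image.mp hB.1
    rcases hQ R R' with h | h | h
    · exact absurd (hA.2.eq_of_subset hB.1 h) hAB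
    · exact absurd (hB.2.eq_of_subset hA.1 h).symm hAB
    · exact h
  · exact Finset.mem_image.mp (Finset.mem_filter.mp hA).1
  · obtain ⟨A, hGA, hA⟩ := Finset.exists_le_maximal _ (Finset.mem_image_of_mem Q hG)
    exact ⟨A, Finset.mem_filter.mpr ⟨hA.prop, hA⟩, hGA⟩

end Laminar

section Carleson

variable {α ι : Type*} [MeasurableSpace α] {μ : Measure α} {Q : ι → Set α} {S : Set ι}
  {Λ : ℝ≥0∞}

def IsCarlesonFamily (μ : Measure α) (Q : ι → Set α) (S : Set ι) (Λ : ℝ≥0∞) : Prop :=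
  ∀ G ∈ S, ∑' G' : {G' : ι // G' ∈ S ∧ Q G' ⊆ Q G}, μ (Q G'.1) ≤ Λ * μ (Q G)

lemma IsCarlesonFamily.sum_filter_subset_le (hS : IsCarlesonFamily μ Q S Λ) {F : Finset ι}
    (hFS : ∀ G ∈ F, G ∈ S) {R : ι} (hR : R ∈ S) :
    ∑ G ∈ F with Q G ⊆ Q R, μ (Q G) ≤ Λ * μ (Q R) := by
  refine le_trans ?_ (hS R hR)
  calc ∑ G ∈ F with Q G ⊆ Q R, μ (Q G) = ∑ G ∈ F with G ∈ S ∧ Q G ⊆ Q R, μ (Q G) := by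
        congr 1
        ext G
        simp only [Finset.mem_filter, and_congr_right_iff]
        exact fun hG => (and_iff_right (hFS G hG)).symm
    _ = ∑ G ∈ F.subtype fun G => G ∈ S ∧ Q G ⊆ Q R, μ (Q G.1) :=
        (Finset.sum_subtype_eq_sum_filter _).symm
    _ ≤ _ := ENNReal.sum_le_tsum _

variable {f : α → ℝ≥0∞} {c : ℝ≥0∞}

lemma IsCarlesonFamily.mul_sum_measure_le (hS : IsCarlesonFamily μ Q S Λ)
    (hQm : ∀ i, MeasurableSet (Q i)) (hQ : IsLaminar Q) {F : Finset ι} (hFS : ∀ G ∈ F, G ∈ S)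
    (hF : ∀ G ∈ F, c < ⨍⁻ x in Q G, f x ∂μ) :
    c * ∑ G ∈ F, μ (Q G) ≤ Λ * ∫⁻ x, f x ∂μ := by
  obtain ⟨𝒜, h𝒜disj, h𝒜F, hcover⟩ := hQ.exists_pairwiseDisjoint_cover F
  have hsplit : ∑ G ∈ F, μ (Q G) ≤ ∑ A ∈ 𝒜, ∑ G ∈ F with Q G ⊆ A, μ (Q G) := by
    simp_rw [Finset.sum_filter]
    rw [Finset.sum_comm]
    refine Finset.sum_le_sum fun G hG => ?_
    obtain ⟨A, hA, hGA⟩ := hcover G hG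
    exact le_of_eq_of_le (if_pos hGA).symm
      (Finset.single_le_sum (f := fun A => if Q G ⊆ A then μ (Q G) else 0) (fun _ _ => zero_le) hA)
  have hstop : ∀ A ∈ 𝒜, c * ∑ G ∈ F with Q G ⊆ A, μ (Q G) ≤ Λ * ∫⁻ x in A, f x ∂μ := by
    intro A hA
    obtain ⟨R, hRF, rfl⟩ := h𝒜F A hA
    calc c * ∑ G ∈ F with Q G ⊆ Q R, μ (Q G) ≤ c * (Λ * μ (Q R)) := by
          gcongr
          exact hS.sum_filter_subset_le hFS (hFS R hRF)
      _ = Λ * (c * μ (Q R)) := mul_left_comm _ _ _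
      _ ≤ Λ * ∫⁻ x in Q R, f x ∂μ := by
          gcongr
          exact mul_measure_le_setLIntegral_of_lt_setLAverage (hF R hRF)
  have h𝒜m : ∀ A ∈ 𝒜, MeasurableSet A := fun A hA => by
    obtain ⟨R, -, rfl⟩ := h𝒜F A hA
    exact hQm R
  calc c * ∑ G ∈ F, μ (Q G) ≤ ∑ A ∈ 𝒜, c * ∑ G ∈ F with Q G ⊆ A, μ (Q G) := by
        rw [← Finset.mul_sum]
        gcongr
    _ ≤ ∑ A ∈ 𝒜, Λ * ∫⁻ x in A, f x ∂μ := Finset.sum_le_sum hstop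
    _ = Λ * ∫⁻ x in ⋃ A ∈ 𝒜, A, f x ∂μ := by
        rw [← Finset.mul_sum]
        exact congrArg _ (lintegral_biUnion_finset h𝒜disj h𝒜m f).symm
    _ ≤ Λ * ∫⁻ x, f x ∂μ := by
        gcongr Λ * ?_
        exact setLIntegral_le_lintegral _ _

lemma IsCarlesonFamily.mul_tsum_measure_le (hS : IsCarlesonFamily μ Q S Λ)
    (hQm : ∀ i, MeasurableSet (Q i)) (hQ : IsLaminar Q) (c : ℝ≥0∞) (f : α → ℝ≥0∞) :
    c * ∑' G : S, (if c < ⨍⁻ x in Q G, f x ∂μ then μ (Q G) else 0) ≤ Λ * ∫⁻ x, f x ∂μ := by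
  rw [ENNReal.tsum_eq_iSup_sum, ENNReal.mul_iSup]
  refine iSup_le fun F => ?_
  rw [← Finset.sum_filter]
  calc _ = c * ∑ G ∈ (F.filter fun G : S => c < ⨍⁻ x in Q G, f x ∂μ).map
          (Function.Embedding.subtype _), μ (Q G) := by
        rw [Finset.sum_map]
        rfl
    _ ≤ Λ * ∫⁻ x, f x ∂μ := by
        refine hS.mul_sum_measure_le hQm hQ ?_ ?_ <;>
          simp +contextual [Finset.mem_map, Finset.mem_filter]

lemma IsCarlesonFamily.mul_tsum_measure_le_lintegral_indicator (hS : IsCarlesonFamily μ Q S Λ)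
    (hQm : ∀ i, MeasurableSet (Q i)) (hQ : IsLaminar Q) (c : ℝ≥0∞) (f : α → ℝ≥0∞) :
    c * ∑' G : S, (if 2 * c < ⨍⁻ x in Q G, f x ∂μ then μ (Q G) else 0)
      ≤ Λ * ∫⁻ x, {x | c < f x}.indicator f x ∂μ :=
  calc _ ≤ c * ∑' G : S,
        (if c < ⨍⁻ x in Q G, {x | c < f x}.indicator f x ∂μ then μ (Q G) else 0) := by
        gcongr with G
        split_ifs with h₁ h₂
        · rfl
        · exact absurd (lt_setLAverage_indicator_of_two_mul_lt h₁) h₂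
        · exact zero_le
        · rfl
    _ ≤ _ := hS.mul_tsum_measure_le hQm hQ _ _

theorem IsCarlesonFamily.tsum_rpow_setLAverage_mul_le (hS : IsCarlesonFamily μ Q S Λ)
    (hQm : ∀ i, MeasurableSet (Q i)) (hQ : IsLaminar Q) {f : α → ℝ≥0∞} (hf : Measurable f)
    {p : ℝ} (hp : 1 < p) :
    ∑' G : S, (⨍⁻ x in Q G, f x ∂μ) ^ p * μ (Q G)
      ≤ 4 ^ p * Λ * (1 - ((2 : ℝ≥0∞) ^ (p - 1))⁻¹)⁻¹ * ∫⁻ x, f x ^ p ∂μ := by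
  set N : ℤ → ℝ≥0∞ := fun j =>
    ∑' G : S, if 2 * 2 ^ j < ⨍⁻ x in Q G, f x ∂μ then μ (Q G) else 0
  set g : ℤ → α → ℝ≥0∞ := fun j => {x | (2 : ℝ≥0∞) ^ j < f x}.indicator f
  calc ∑' G : S, (⨍⁻ x in Q G, f x ∂μ) ^ p * μ (Q G)
      ≤ 4 ^ p * ∑' j : ℤ, ((2 : ℝ≥0∞) ^ j) ^ p * N j :=
        tsum_rpow_mul_le_four_rpow_mul_tsum (by linarith) _ _
    _ = 4 ^ p * ∑' j : ℤ, ((2 : ℝ≥0∞) ^ j) ^ (p - 1) * (2 ^ j * N j) := by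
        simp_rw [← mul_assoc, rpow_sub_one_mul_self hp.le]
    _ ≤ 4 ^ p * ∑' j : ℤ, ((2 : ℝ≥0∞) ^ j) ^ (p - 1) * (Λ * ∫⁻ x, g j x ∂μ) := by
        gcongr 4 ^ p * ∑' j, _ * ?_ with j
        exact hS.mul_tsum_measure_le_lintegral_indicator hQm hQ _ f
    _ = 4 ^ p * Λ * ∑' j : ℤ, ((2 : ℝ≥0∞) ^ j) ^ (p - 1) * ∫⁻ x, g j x ∂μ := by
        simp_rw [mul_left_comm _ Λ, ENNReal.tsum_mul_left, mul_assoc]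
    _ ≤ 4 ^ p * Λ * ((1 - ((2 : ℝ≥0∞) ^ (p - 1))⁻¹)⁻¹ * ∫⁻ x, f x ^ p ∂μ) := by
        gcongr
        exact tsum_two_zpow_rpow_mul_lintegral_indicator_le hf hp
    _ = _ := by simp only [mul_assoc]

end Carleson

section Dyadic

variable {n : ℕ}

lemma mem_dyadicCube_iff {k : ℤ} {m : Fin n → ℤ} {x : Fin n → ℝ} :
    x ∈ dyadicCube n k m ↔ ∀ i, ⌊(2 : ℝ) ^ k * x i⌋ = m i := by
  have h2k : (0 : ℝ) < 2 ^ k := zpow_pos two_pos k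
  simp only [dyadicCube, mem_ofPred_eq, mem_Ico, Int.floor_eq_iff, zpow_neg,
    inv_mul_le_iff₀ h2k, lt_inv_mul_iff₀ h2k]

lemma floor_two_zpow_mul_eq_div (k : ℤ) (d : ℕ) (t : ℝ) :
    ⌊(2 : ℝ) ^ k * t⌋ = ⌊(2 : ℝ) ^ (k + d) * t⌋ / (2 ^ d : ℕ) := by
  rw [zpow_add₀ two_ne_zero, zpow_natCast, mul_right_comm, ← Nat.cast_ofNat (R := ℝ),
    ← Nat.cast_pow, Int.mul_natCast_floor_div_cancel (by positivity)]

lemma dyadicCube_subset_of_mem {k k' : ℤ} {m m' : Fin n → ℤ} (hk : k ≤ k') {x : Fin n → ℝ}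
    (hx : x ∈ dyadicCube n k m) (hx' : x ∈ dyadicCube n k' m') :
    dyadicCube n k' m' ⊆ dyadicCube n k m := by
  obtain ⟨d, rfl⟩ := Int.le.dest hk
  intro y hy
  rw [mem_dyadicCube_iff] at hx hx' hy ⊢
  intro i
  rw [floor_two_zpow_mul_eq_div k d, hy i, ← hx' i, ← floor_two_zpow_mul_eq_div, hx i]

lemma isLaminar_idxCube (n : ℕ) : IsLaminar (idxCube n) := by
  intro Q Q'
  rcases disjoint_or_nonempty_inter (idxCube n Q) (idxCube n Q') with h | ⟨x, hx, hx'⟩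
  · exact Or.inr (Or.inr h)
  rcases le_total Q.1 Q'.1 with h | h
  · exact Or.inr (Or.inl (dyadicCube_subset_of_mem h hx hx'))
  · exact Or.inl (dyadicCube_subset_of_mem h hx' hx)

lemma measurableSet_idxCube (Q : CubeIdx n) : MeasurableSet (idxCube n Q) := by
  rw [idxCube, dyadicCube, ofPred_forall]
  exact MeasurableSet.iInter fun i => measurableSet_Ico.preimage (measurable_pi_apply i)

lemma cubeAvg_eq_setLAverage (ν : Measure (Fin n → ℝ)) (h : (Fin n → ℝ) → ℝ≥0∞) (k : ℤ)
    (m : Fin n → ℤ) : cubeAvg n ν h k m = ⨍⁻ x in dyadicCube n k m, h x ∂ν :=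
  (setLAverage_eq _ _ _).symm

end Dyadic

end CarlesonEmbedding

open CarlesonEmbedding

/-- The Carleson embedding for a 2-Carleson family `𝒢 ⊆ 𝒟`:
`∑_{G ∈ 𝒢} (⟨h⟩_G^ω)^p ω(G) ≤ C_p ∫ h^p dω` with `C_p` depending only on `p`. -/
theorem statement7 :
    ∀ p : ℝ, 1 < p → ∃ C : ℝ≥0∞, C < ∞ ∧
    ∀ (n : ℕ), 0 < n → ∀ ω : Measure (Fin n → ℝ), IsLocallyFiniteMeasure ω →
    ∀ S : Set (CubeIdx n),
    (∀ G ∈ S, (∑' G' : {G' : CubeIdx n // G' ∈ S ∧ idxCube n G' ⊆ idxCube n G},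
        ω (idxCube n G'.1)) ≤ 2 * ω (idxCube n G)) →
    ∀ h : (Fin n → ℝ) → ℝ≥0∞, Measurable h →
      (∑' G : S, (cubeAvg n ω h G.1.1 G.1.2) ^ p * ω (idxCube n G.1))
        ≤ C * ∫⁻ x, (h x) ^ p ∂ω := by
  intro p hp
  refine ⟨4 ^ p * 2 * (1 - ((2 : ℝ≥0∞) ^ (p - 1))⁻¹)⁻¹, ?_, ?_⟩
  · have h4 : (4 : ℝ≥0∞) ^ p < ∞ :=
      ENNReal.rpow_lt_top_of_nonneg (by linarith) ENNReal.ofNat_ne_top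
    have hK : (1 - ((2 : ℝ≥0∞) ^ (p - 1))⁻¹)⁻¹ < ∞ := ENNReal.inv_lt_top.mpr
      (tsub_pos_of_lt (ENNReal.inv_lt_one.mpr (ENNReal.one_lt_rpow one_lt_two (by linarith))))
    exact ENNReal.mul_lt_top (ENNReal.mul_lt_top h4 ENNReal.ofNat_lt_top) hK
  intro n _ ω _ S hS h hh
  simp only [cubeAvg_eq_setLAverage]
  exact IsCarlesonFamily.tsum_rpow_setLAverage_mul_le hS measurableSet_idxCube
    (isLaminar_idxCube n) hh hp
end
end

section
/- Let p ∈ [2,∞) with conjugate p' = p/(p-1), and let A, B > 0. Let F ∈ 𝒟 and let {F_i}_{i ∈ I} be a countable collection of pairwise disjoint dyadic cubes contained in F such that ∑_{i ∈ I} ∬_{F̂_i} φ_F μ dη dσ ≤ A^{-1} ∬_{F̂} φ_F μ dη dσ. Then ∑_{i ∈ I} ‖φ_{F_i}‖_{L^p(σ;ℓ²)}^p ≤ (B^{-p'} + B^{2-p'} A^{-1}) ‖φ_F‖_{L^p(σ;ℓ²)}^p. In particular, for B = 4^{1/p'} and A = 4 B^{2-p'} = 4^{2/p'}, one has ∑_{i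 ∈ I} ‖φ_{F_i}‖_{L^p(σ;ℓ²)}^p ≤ (1/2) ‖φ_F‖_{L^p(σ;ℓ²)}^p. -/
open MeasureTheory ENNReal Set
open scoped Classical NNReal ENNReal

noncomputable section

/-! Writing `G_Q = |1_{Q̂} μ|_{ℓ²}`, one has `|φ_Q|_{ℓ²} = G_Q^{p'-1}`, hence
`‖φ_Q‖_{L^p(σ;ℓ²)}^p = ∫_Q G_Q^{p'}`, and `∬_{Q̂} φ_F μ = ∫_Q G_F^{p'-2} G_Q^2` whenever `Q ⊆ F`.
Since `G_{F_i} ≤ G_F` and `p' ≤ 2`, splitting according to whether `G_{F_i} ≤ G_F / B` gives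
`G_{F_i}^{p'} ≤ B^{-p'} G_F^{p'} + B^{2-p'} G_F^{p'-2} G_{F_i}^2` pointwise. Integrating over `F_i`
and summing over the disjoint cubes, the first terms add up to at most `B^{-p'} ∫_F G_F^{p'}`
and the second ones to `B^{2-p'} ∑_i ∬_{F̂_i} φ_F μ ≤ B^{2-p'} A⁻¹ ∬_{F̂} φ_F μ`, which is
`B^{2-p'} A⁻¹ ∫_F G_F^{p'}`. -/

lemma ENNReal.rpow_le_rpow_of_nonpos {x y : ℝ≥0∞} {z : ℝ} (h : x ≤ y) (hz : z ≤ 0) :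
    y ^ z ≤ x ^ z := by
  rw [← neg_neg z, ENNReal.rpow_neg y, ENNReal.rpow_neg x]
  exact ENNReal.inv_le_inv.2 (ENNReal.rpow_le_rpow h (neg_nonneg.2 hz))

lemma ENNReal.rpow_le_rpow_neg_mul_add {a b B : ℝ≥0∞} {q : ℝ} (ha : a ≠ ∞) (hb : b ≠ ∞)
    (hB : B ≠ 0) (hq0 : 0 < q) (hq2 : q ≤ 2) :
    a ^ q ≤ B ^ (-q) * b ^ q + B ^ (2 - q) * (b ^ (q - 2) * a ^ 2) := by
  rcases le_or_gt a (B⁻¹ * b) with hsmall | hlarge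
  · refine le_add_right ?_
    calc a ^ q ≤ (B⁻¹ * b) ^ q := ENNReal.rpow_le_rpow hsmall hq0.le
      _ = B ^ (-q) * b ^ q := by
        rw [ENNReal.mul_rpow_of_nonneg _ _ hq0.le, ENNReal.inv_rpow, ← ENNReal.rpow_neg]
  · refine le_add_left ?_
    calc a ^ q = a ^ (q - 2) * a ^ 2 := by
          rw [← ENNReal.rpow_two, ← ENNReal.rpow_add_of_add_pos ha (q - 2) 2 (by linarith),
            sub_add_cancel]
      _ ≤ (B⁻¹ * b) ^ (q - 2) * a ^ 2 :=
          mul_le_mul_left (ENNReal.rpow_le_rpow_of_nonpos hlarge.le (by linarith)) _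
      _ = B ^ (2 - q) * (b ^ (q - 2) * a ^ 2) := by
          rw [ENNReal.mul_rpow_of_ne_top (ENNReal.inv_ne_top.2 hB) hb, ENNReal.inv_rpow,
            ← ENNReal.rpow_neg, neg_sub, mul_assoc]

section Dyadic

variable {n : ℕ} {σ : Measure (Fin n → ℝ)} {μ f g : (Fin n → ℝ) × ℝ → ℝ≥0∞}
  {k k' : ℤ} {m m' : Fin n → ℤ} {x : Fin n → ℝ} {q : ℝ}

lemma dyadicCube_eq_pi (n : ℕ) (k : ℤ) (m : Fin n → ℤ) :
    dyadicCube n k m = univ.pi fun i => Ico ((2:ℝ) ^ (-k) * m i) ((2:ℝ) ^ (-k) * (m i + 1)) := by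
  ext x
  simp [dyadicCube, mem_pi]

lemma measurableSet_dyadicCube : MeasurableSet (dyadicCube n k m) :=
  dyadicCube_eq_pi n k m ▸ MeasurableSet.univ_pi fun _ => measurableSet_Ico

lemma zpow_neg_le_of_dyadicCube_subset (hn : 0 < n)
    (h : dyadicCube n k m ⊆ dyadicCube n k' m') : (2:ℝ) ^ (-k) ≤ (2:ℝ) ^ (-k') := by
  have hlt : ∀ (k : ℤ) (a : ℝ), (2:ℝ) ^ (-k) * a < (2:ℝ) ^ (-k) * (a + 1) := fun k a =>
    mul_lt_mul_of_pos_left (lt_add_one a) (zpow_pos two_pos _)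
  rw [dyadicCube_eq_pi, dyadicCube_eq_pi, univ_pi_subset_univ_pi_iff] at h
  rcases h with h | ⟨i, hi⟩
  · obtain ⟨h₁, h₂⟩ := (Ico_subset_Ico_iff (hlt k _)).1 (h ⟨0, hn⟩)
    linarith
  · exact absurd hi (nonempty_Ico.2 (hlt k _)).ne_empty

lemma carlesonBox_subset_of_dyadicCube_subset (hn : 0 < n)
    (h : dyadicCube n k m ⊆ dyadicCube n k' m') : carlesonBox n k m ⊆ carlesonBox n k' m' :=
  prod_mono h (Ioc_subset_Ioc_right (zpow_neg_le_of_dyadicCube_subset hn h))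

lemma measurable_boxFn (hμ : Measurable μ) : Measurable (boxFn n μ k m) :=
  hμ.indicator (measurableSet_dyadicCube.prod measurableSet_Ioc)

lemma boxFn_mono (h : carlesonBox n k m ⊆ carlesonBox n k' m') :
    boxFn n μ k m ≤ boxFn n μ k' m' :=
  indicator_le_indicator_of_subset h fun _ => zero_le

lemma measurable_vertL2 (hf : Measurable f) : Measurable (vertL2 n f) :=
  (Measurable.tsum fun _ => (hf.comp measurable_prodMk_right).pow_const 2).pow_const _

lemma vertL2_mono (h : f ≤ g) : vertL2 n f ≤ vertL2 n g := fun _ =>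
  ENNReal.rpow_le_rpow (ENNReal.tsum_le_tsum fun _ => pow_le_pow_left' (h _) 2) (by norm_num)

lemma vertL2_congr (h : ∀ j : ℤ, f (x, (2:ℝ) ^ j) = g (x, (2:ℝ) ^ j)) :
    vertL2 n f x = vertL2 n g x := by
  simp only [vertL2, h]

lemma vertL2_sq : vertL2 n f x ^ 2 = ∑' j : ℤ, f (x, (2:ℝ) ^ j) ^ 2 := by
  rw [vertL2, ← ENNReal.rpow_natCast, ← ENNReal.rpow_mul,
    ← (Equiv.neg ℤ).tsum_eq fun j => f (x, (2:ℝ) ^ j) ^ 2]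
  norm_num

lemma vertL2_mul_left (c : (Fin n → ℝ) → ℝ≥0∞) :
    vertL2 n (fun z => c z.1 * f z) x = c x * vertL2 n f x := by
  simp only [vertL2, mul_pow, ENNReal.tsum_mul_left]
  rw [ENNReal.mul_rpow_of_nonneg _ _ (by norm_num), ← ENNReal.rpow_natCast, ← ENNReal.rpow_mul]
  norm_num

lemma apply_zpow_eq_zero_of_vertL2_eq_zero (h : vertL2 n f x = 0) (j : ℤ) :
    f (x, (2:ℝ) ^ j) = 0 := by
  have hsum := vertL2_sq (f := f) (x := x)
  rw [h, zero_pow two_ne_zero, eq_comm, ENNReal.tsum_eq_zero] at hsum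
  exact pow_eq_zero_iff two_ne_zero |>.1 (hsum j)

lemma vertL2_boxFn_eq_zero_of_notMem (hx : x ∉ dyadicCube n k m) :
    vertL2 n (boxFn n μ k m) x = 0 := by
  simp [vertL2, boxFn, carlesonBox, hx]

lemma ae_vertL2_lt_top (hf : Measurable f) (hq : 0 < q) (hfin : mixedNorm n σ q f < ∞) :
    ∀ᵐ x ∂σ, vertL2 n f x < ∞ := by
  rw [mixedNorm, ENNReal.rpow_lt_top_iff_of_pos (by positivity)] at hfin
  filter_upwards [ae_lt_top ((measurable_vertL2 hf).pow_const q) hfin.ne] with x hx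
  exact (ENNReal.rpow_lt_top_iff_of_pos hq).1 hx

/-- The case split in `testFn` is invisible at dyadic heights: where `|1_{Q̂} μ|_{ℓ²} = 0` the
factor `1_{Q̂} μ` vanishes there, and `∞ * 0 = 0` absorbs `0 ^ (q - 2) = ∞`. -/
lemma testFn_apply_zpow (j : ℤ) :
    testFn n q μ k m (x, (2:ℝ) ^ j)
      = vertL2 n (boxFn n μ k m) x ^ (q - 2) * boxFn n μ k m (x, (2:ℝ) ^ j) := by
  unfold testFn
  split_ifs with h
  · rw [apply_zpow_eq_zero_of_vertL2_eq_zero h j, mul_zero]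
  · rfl

lemma vertL2_testFn (hq : 1 < q) (hx : vertL2 n (boxFn n μ k m) x ≠ ∞) :
    vertL2 n (testFn n q μ k m) x = vertL2 n (boxFn n μ k m) x ^ (q - 1) := by
  have hadd := ENNReal.rpow_add_of_add_pos hx (q - 2) 1 (by linarith)
  rw [ENNReal.rpow_one, (by ring : q - 2 + 1 = q - 1)] at hadd
  rw [vertL2_congr (g := fun z => vertL2 n (boxFn n μ k m) z.1 ^ (q - 2) * boxFn n μ k m z)
      testFn_apply_zpow, vertL2_mul_left fun y => vertL2 n (boxFn n μ k m) y ^ (q - 2), hadd]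

lemma mixedNorm_testFn_rpow {p : ℝ} (hμ : Measurable μ) (hpq : p.HolderConjugate q)
    (hfin : mixedNorm n σ q (boxFn n μ k m) < ∞) :
    mixedNorm n σ p (testFn n q μ k m) ^ p
      = ∫⁻ x in dyadicCube n k m, vertL2 n (boxFn n μ k m) x ^ q ∂σ := by
  have hsupp : (fun x => vertL2 n (boxFn n μ k m) x ^ q).support ⊆ dyadicCube n k m :=
    Function.support_subset_iff'.2 fun x hQ => by
      simp only [vertL2_boxFn_eq_zero_of_notMem hQ, ENNReal.zero_rpow_of_pos hpq.symm.pos]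
  rw [mixedNorm, ← ENNReal.rpow_mul, one_div_mul_cancel hpq.ne_zero, ENNReal.rpow_one,
    setLIntegral_eq_of_support_subset hsupp]
  refine lintegral_congr_ae ?_
  filter_upwards [ae_vertL2_lt_top (measurable_boxFn hμ) hpq.symm.pos hfin] with x hx
  rw [vertL2_testFn hpq.symm.lt hx.ne, ← ENNReal.rpow_mul, hpq.symm.sub_one_mul_conj]

lemma boxInt_testFn_eq (hμ : Measurable μ) (q : ℝ) (hQF : carlesonBox n k m ⊆ carlesonBox n k' m') :
    boxInt n σ μ (testFn n q μ k' m') k m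
      = ∫⁻ x in dyadicCube n k m,
          vertL2 n (boxFn n μ k' m') x ^ (q - 2) * vertL2 n (boxFn n μ k m) x ^ 2 ∂σ := by
  have hterm : ∀ j : ℤ,
      (if (2:ℝ) ^ j ≤ (2:ℝ) ^ (-k) then
        ∫⁻ x in dyadicCube n k m, testFn n q μ k' m' (x, (2:ℝ) ^ j) * μ (x, (2:ℝ) ^ j) ∂σ
      else 0)
        = ∫⁻ x in dyadicCube n k m,
            vertL2 n (boxFn n μ k' m') x ^ (q - 2) * boxFn n μ k m (x, (2:ℝ) ^ j) ^ 2 ∂σ := by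
    intro j
    split_ifs with hj
    · refine setLIntegral_congr_fun measurableSet_dyadicCube fun x hx => ?_
      have hQ : (x, (2:ℝ) ^ j) ∈ carlesonBox n k m := ⟨hx, zpow_pos two_pos j, hj⟩
      rw [testFn_apply_zpow, boxFn, boxFn, indicator_of_mem hQ, indicator_of_mem (hQF hQ),
        mul_assoc, sq]
    · have hout : ∀ x, boxFn n μ k m (x, (2:ℝ) ^ j) = 0 := fun x =>
        indicator_of_notMem (fun h => hj h.2.2) _
      simp [hout]
  have hmeas : ∀ j : ℤ, Measurable fun x =>
      vertL2 n (boxFn n μ k' m') x ^ (q - 2) * boxFn n μ k m (x, (2:ℝ) ^ j) ^ 2 := fun j =>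
    ((measurable_vertL2 (measurable_boxFn hμ)).pow_const _).mul
      (((measurable_boxFn hμ).comp measurable_prodMk_right).pow_const 2)
  rw [boxInt, tsum_congr hterm, ← lintegral_tsum fun j => (hmeas j).aemeasurable]
  simp only [ENNReal.tsum_mul_left, vertL2_sq]

lemma boxInt_testFn_self (hμ : Measurable μ) (hq : 0 < q)
    (hfin : mixedNorm n σ q (boxFn n μ k m) < ∞) :
    boxInt n σ μ (testFn n q μ k m) k m
      = ∫⁻ x in dyadicCube n k m, vertL2 n (boxFn n μ k m) x ^ q ∂σ := by
  rw [boxInt_testFn_eq hμ q subset_rfl]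
  refine lintegral_congr_ae ?_
  filter_upwards [ae_restrict_of_ae (ae_vertL2_lt_top (measurable_boxFn hμ) hq hfin)] with x hx
  rw [← ENNReal.rpow_two, ← ENNReal.rpow_add_of_add_pos hx.ne (q - 2) 2 (by linarith),
    sub_add_cancel]

lemma setLIntegral_rpow_vertL2_boxFn_le (hn : 0 < n) (hμ : Measurable μ) (hq0 : 0 < q)
    (hq2 : q ≤ 2) (hfin : mixedNorm n σ q (boxFn n μ k' m') < ∞)
    (hQF : dyadicCube n k m ⊆ dyadicCube n k' m') {B : ℝ≥0∞} (hB : B ≠ 0) :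
    ∫⁻ x in dyadicCube n k m, vertL2 n (boxFn n μ k m) x ^ q ∂σ
      ≤ B ^ (-q) * ∫⁻ x in dyadicCube n k m, vertL2 n (boxFn n μ k' m') x ^ q ∂σ
        + B ^ (2 - q) * boxInt n σ μ (testFn n q μ k' m') k m := by
  set G := vertL2 n (boxFn n μ k' m')
  set GQ := vertL2 n (boxFn n μ k m)
  have hbox := carlesonBox_subset_of_dyadicCube_subset hn hQF
  have hG : Measurable G := measurable_vertL2 (measurable_boxFn hμ)
  have hGQ : Measurable GQ := measurable_vertL2 (measurable_boxFn hμ)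
  calc ∫⁻ x in dyadicCube n k m, GQ x ^ q ∂σ
      ≤ ∫⁻ x in dyadicCube n k m,
          (B ^ (-q) * G x ^ q + B ^ (2 - q) * (G x ^ (q - 2) * GQ x ^ 2)) ∂σ := by
        refine lintegral_mono_ae ?_
        filter_upwards [ae_restrict_of_ae (ae_vertL2_lt_top (measurable_boxFn hμ) hq0 hfin)]
          with x hx
        have hGQx : GQ x ≠ ∞ := ne_top_of_le_ne_top hx.ne (vertL2_mono (boxFn_mono hbox) x)
        exact ENNReal.rpow_le_rpow_neg_mul_add hGQx hx.ne hB hq0 hq2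
    _ = _ := by
        rw [lintegral_add_left (by fun_prop), lintegral_const_mul _ (by fun_prop),
          lintegral_const_mul _ (by fun_prop), boxInt_testFn_eq hμ q hbox]

theorem tsum_mixedNorm_testFn_rpow_le {p : ℝ} (hn : 0 < n) (hμ : Measurable μ)
    (hpq : p.HolderConjugate q) (hq2 : q ≤ 2) (F : CubeIdx n)
    (hfinF : mixedNorm n σ q (boxFn n μ F.1 F.2) < ∞) {I : Type*} [Countable I]
    (Fi : I → CubeIdx n) (hfin : ∀ i, mixedNorm n σ q (boxFn n μ (Fi i).1 (Fi i).2) < ∞)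
    (hsub : ∀ i, idxCube n (Fi i) ⊆ idxCube n F)
    (hdisj : Pairwise fun i j => Disjoint (idxCube n (Fi i)) (idxCube n (Fi j)))
    {A B : ℝ≥0∞} (hB : B ≠ 0)
    (hstop : ∑' i, boxInt n σ μ (testFn n q μ F.1 F.2) (Fi i).1 (Fi i).2
      ≤ A⁻¹ * boxInt n σ μ (testFn n q μ F.1 F.2) F.1 F.2) :
    ∑' i, mixedNorm n σ p (testFn n q μ (Fi i).1 (Fi i).2) ^ p
      ≤ (B ^ (-q) + B ^ (2 - q) * A⁻¹) * mixedNorm n σ p (testFn n q μ F.1 F.2) ^ p := by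
  set G := vertL2 n (boxFn n μ F.1 F.2)
  have hsum : ∑' i, ∫⁻ x in idxCube n (Fi i), G x ^ q ∂σ ≤ ∫⁻ x in idxCube n F, G x ^ q ∂σ := by
    rw [← lintegral_iUnion (s := fun i => idxCube n (Fi i)) (fun _ => measurableSet_dyadicCube)
      hdisj]
    exact lintegral_mono_set (iUnion_subset hsub)
  calc ∑' i, mixedNorm n σ p (testFn n q μ (Fi i).1 (Fi i).2) ^ p
      = ∑' i, ∫⁻ x in idxCube n (Fi i), vertL2 n (boxFn n μ (Fi i).1 (Fi i).2) x ^ q ∂σ :=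
        tsum_congr fun i => mixedNorm_testFn_rpow hμ hpq (hfin i)
    _ ≤ ∑' i, (B ^ (-q) * ∫⁻ x in idxCube n (Fi i), G x ^ q ∂σ
          + B ^ (2 - q) * boxInt n σ μ (testFn n q μ F.1 F.2) (Fi i).1 (Fi i).2) :=
        ENNReal.tsum_le_tsum fun i =>
          setLIntegral_rpow_vertL2_boxFn_le hn hμ hpq.symm.pos hq2 hfinF (hsub i) hB
    _ = B ^ (-q) * ∑' i, ∫⁻ x in idxCube n (Fi i), G x ^ q ∂σ
          + B ^ (2 - q) * ∑' i, boxInt n σ μ (testFn n q μ F.1 F.2) (Fi i).1 (Fi i).2 := by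
        rw [ENNReal.tsum_add, ENNReal.tsum_mul_left, ENNReal.tsum_mul_left]
    _ ≤ B ^ (-q) * ∫⁻ x in idxCube n F, G x ^ q ∂σ
          + B ^ (2 - q) * (A⁻¹ * boxInt n σ μ (testFn n q μ F.1 F.2) F.1 F.2) := by
        gcongr
    _ = _ := by
        rw [boxInt_testFn_self hμ hpq.symm.pos hfinF, mixedNorm_testFn_rpow hμ hpq hfinF]
        unfold idxCube
        ring

end Dyadic

lemma rpow_neg_add_rpow_two_sub_mul_inv_eq_half {q : ℝ} (hq : q ≠ 0) :
    ((4 : ℝ≥0∞) ^ (1 / q)) ^ (-q) + ((4 : ℝ≥0∞) ^ (1 / q)) ^ (2 - q) * ((4 : ℝ≥0∞) ^ (2 / q))⁻¹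
      = 1 / 2 := by
  rw [← ENNReal.rpow_mul, ← ENNReal.rpow_mul, ← ENNReal.rpow_neg,
    ← ENNReal.rpow_add _ _ (by norm_num) (by norm_num),
    (by field_simp : 1 / q * -q = -1), (by field_simp; ring : 1 / q * (2 - q) + -(2 / q) = -1),
    ENNReal.rpow_neg_one, ← two_mul, (by norm_num : (4 : ℝ≥0∞) = 2 * 2),
    ENNReal.mul_inv (by norm_num) (by norm_num), ← mul_assoc,
    ENNReal.mul_inv_cancel (by norm_num) (by norm_num), one_mul, one_div]

theorem statement8_general (p : ℝ) (hp : 2 ≤ p) (n : ℕ) (hn : 0 < n)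
    (σ : Measure (Fin n → ℝ))
    (μ : (Fin n → ℝ) × ℝ → ℝ≥0∞) (hμ : Measurable μ)
    (hfin : ∀ Q : CubeIdx n, mixedNorm n σ (p/(p-1)) (boxFn n μ Q.1 Q.2) < ∞)
    (F : CubeIdx n) (I : Type) [Countable I] (Fi : I → CubeIdx n)
    (hsub : ∀ i, idxCube n (Fi i) ⊆ idxCube n F)
    (hdisj : Pairwise fun i j => Disjoint (idxCube n (Fi i)) (idxCube n (Fi j))) :
    (∀ A B : ℝ≥0, 0 < A → 0 < B →
      (∑' i : I, boxInt n σ μ (testFn n (p/(p-1)) μ F.1 F.2) (Fi i).1 (Fi i).2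
          ≤ (A : ℝ≥0∞)⁻¹ * boxInt n σ μ (testFn n (p/(p-1)) μ F.1 F.2) F.1 F.2) →
      (∑' i : I, mixedNorm n σ p (testFn n (p/(p-1)) μ (Fi i).1 (Fi i).2) ^ p)
        ≤ ((B : ℝ≥0∞) ^ (-(p/(p-1))) + (B : ℝ≥0∞) ^ (2 - p/(p-1)) * (A : ℝ≥0∞)⁻¹)
            * mixedNorm n σ p (testFn n (p/(p-1)) μ F.1 F.2) ^ p)
    ∧
    ((∑' i : I, boxInt n σ μ (testFn n (p/(p-1)) μ F.1 F.2) (Fi i).1 (Fi i).2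
          ≤ ((4 : ℝ≥0∞) ^ (2/(p/(p-1))))⁻¹
              * boxInt n σ μ (testFn n (p/(p-1)) μ F.1 F.2) F.1 F.2) →
      (∑' i : I, mixedNorm n σ p (testFn n (p/(p-1)) μ (Fi i).1 (Fi i).2) ^ p)
        ≤ (1/2) * mixedNorm n σ p (testFn n (p/(p-1)) μ F.1 F.2) ^ p) := by
  have hpq : p.HolderConjugate (p / (p - 1)) :=
    (Real.holderConjugate_iff_eq_conjExponent (by linarith)).2 rfl
  have hq2 : p / (p - 1) ≤ 2 := by
    rw [div_le_iff₀ (by linarith)]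
    linarith
  have hbound := fun {A B : ℝ≥0∞} (hB : B ≠ 0) =>
    tsum_mixedNorm_testFn_rpow_le (A := A) hn hμ hpq hq2 F (hfin F) Fi (fun i => hfin (Fi i))
      hsub hdisj hB
  refine ⟨fun A B _ hB hstop => hbound (by exact_mod_cast hB.ne') hstop, fun hstop => ?_⟩
  rw [← rpow_neg_add_rpow_two_sub_mul_inv_eq_half hpq.symm.ne_zero]
  exact hbound (by positivity) hstop

/-- The key estimate (3.2)/(sparseness) for the test functions: if pairwise disjoint dyadic
cubes `F_i ⊆ F` satisfy `∑_i ∬_{F̂_i} φ_F μ ≤ A⁻¹ ∬_{F̂} φ_F μ`, then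
`∑_i ‖φ_{F_i}‖_{L^p(σ;ℓ²)}^p ≤ (B^{-p'} + B^{2-p'} A⁻¹) ‖φ_F‖_{L^p(σ;ℓ²)}^p` for all
`A, B > 0`; in particular, for `B = 4^{1/p'}` and `A = 4^{2/p'}` the factor is `1/2`. -/
theorem statement8 (p : ℝ) (hp : 2 ≤ p) (n : ℕ) (hn : 0 < n)
    (σ : Measure (Fin n → ℝ)) [IsLocallyFiniteMeasure σ]
    (μ : (Fin n → ℝ) × ℝ → ℝ≥0∞) (hμ : Measurable μ)
    (hfin : ∀ Q : CubeIdx n, mixedNorm n σ (p/(p-1)) (boxFn n μ Q.1 Q.2) < ∞)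
    (F : CubeIdx n) (I : Type) [Countable I] (Fi : I → CubeIdx n)
    (hsub : ∀ i, idxCube n (Fi i) ⊆ idxCube n F)
    (hdisj : Pairwise fun i j => Disjoint (idxCube n (Fi i)) (idxCube n (Fi j))) :
    (∀ A B : ℝ≥0, 0 < A → 0 < B →
      (∑' i : I, boxInt n σ μ (testFn n (p/(p-1)) μ F.1 F.2) (Fi i).1 (Fi i).2
          ≤ (A : ℝ≥0∞)⁻¹ * boxInt n σ μ (testFn n (p/(p-1)) μ F.1 F.2) F.1 F.2) →
      (∑' i : I, mixedNorm n σ p (testFn n (p/(p-1)) μ (Fi i).1 (Fi i).2) ^ p)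
        ≤ ((B : ℝ≥0∞) ^ (-(p/(p-1))) + (B : ℝ≥0∞) ^ (2 - p/(p-1)) * (A : ℝ≥0∞)⁻¹)
            * mixedNorm n σ p (testFn n (p/(p-1)) μ F.1 F.2) ^ p)
    ∧
    ((∑' i : I, boxInt n σ μ (testFn n (p/(p-1)) μ F.1 F.2) (Fi i).1 (Fi i).2
          ≤ ((4 : ℝ≥0∞) ^ (2/(p/(p-1))))⁻¹
              * boxInt n σ μ (testFn n (p/(p-1)) μ F.1 F.2) F.1 F.2) →
      (∑' i : I, mixedNorm n σ p (testFn n (p/(p-1)) μ (Fi i).1 (Fi i).2) ^ p)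
        ≤ (1/2) * mixedNorm n σ p (testFn n (p/(p-1)) μ F.1 F.2) ^ p) :=
  statement8_general p hp n hn σ μ hμ hfin F I Fi hsub hdisj
end
end
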